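/- arXiv:1904.01669 — 5 statements merged into one kernel-verified Lean document; each statement's English description precedes it below -/
import Mathlib

section
/- Let H be a finite-dimensional complex Hilbert space, Ω = Σ_k √λ_k (u ζ_k) ⊗ ζ_k a unit vector with {ζ_k} orthonormal basis of H, λ_k > 0, Σλ_k = 1, u unitary on H. Let ρ = Σ λ_k |ζ_k⟩⟨ζ_k| and c the conjugation fixing each ζ_k. Suppose Γ is a unitary on H ⊗ H with ΓΩ = Ω and Γ(ξ ⊗ η) = σ (η ⊗ ξ) for all ξ, η ∈ H, where σ = ±1. Then u = σ c* u* c. -/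
open Matrix Kronecker

/-- The simple tensor of two vectors in `H ⊗ H`. -/
def tens {n : Type*} (ξ η : n → ℂ) : n × n → ℂ := fun p => ξ p.1 * η p.2

lemma dot_tens {n : Type*} [Fintype n] (a b x y : n → ℂ) :
    star (tens a b) ⬝ᵥ tens x y = (star a ⬝ᵥ x) * (star b ⬝ᵥ y) := by
  simp only [dotProduct, tens, Fintype.sum_prod_type, Finset.sum_mul_sum, Pi.star_apply,
    star_mul']
  congr 1; funext i; congr 1; funext j; ring

lemma dot_sum_smul {n : Type*} [Fintype n] (t : n × n → ℂ) (c : n → ℂ) (w : n → n × n → ℂ) :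
    t ⬝ᵥ (∑ m, c m • w m) = ∑ m, c m * (t ⬝ᵥ w m) := by
  simp only [dotProduct, Finset.sum_apply, Pi.smul_apply, smul_eq_mul, Finset.mul_sum]
  rw [Finset.sum_comm]
  exact Finset.sum_congr rfl fun m _ => Finset.sum_congr rfl fun p _ => by ring

/-- Let `Ω = Σ_k √λ_k (u ζ_k) ⊗ ζ_k` with `{ζ_k}` an orthonormal basis, `λ_k > 0`
summing to `1`, `u` unitary, and `c` the conjugation fixing each `ζ_k` (with matrix
`C = Σ_k |ζ_k⟩(ζ_k)ᵀ`, so `c v = C (star v)` and `c* = c`). If `Γ` is a unitary on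
`H ⊗ H` with `Γ Ω = Ω` and `Γ (ξ ⊗ η) = σ (η ⊗ ξ)` for all `ξ, η` with `σ = ±1`,
then `u = σ c* u* c`. -/
theorem stmt8 {n : Type*} [Fintype n] [DecidableEq n]
    (lam : n → ℝ) (hpos : ∀ k, 0 < lam k) (hsum : ∑ k, lam k = 1)
    (ζ : n → n → ℂ)
    (hζ : ∀ k l, star (ζ k) ⬝ᵥ ζ l = if k = l then 1 else 0)
    (hbasis : Submodule.span ℂ (Set.range ζ) = ⊤)
    (u : Matrix n n ℂ) (hu : u ∈ Matrix.unitaryGroup n ℂ)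
    (C : Matrix n n ℂ) (hC : C = ∑ k, vecMulVec (ζ k) (ζ k))
    (Ω : n × n → ℂ)
    (hΩ : Ω = ∑ k, (Real.sqrt (lam k) : ℂ) • tens (u.mulVec (ζ k)) (ζ k))
    (Γ : Matrix (n × n) (n × n) ℂ) (hΓ : Γ ∈ Matrix.unitaryGroup (n × n) ℂ)
    (hfix : Γ.mulVec Ω = Ω)
    (σ : ℂ) (hσ : σ = 1 ∨ σ = -1)
    (hflip : ∀ ξ η : n → ℂ, Γ.mulVec (tens ξ η) = σ • tens η ξ) :
    ∀ v : n → ℂ, u.mulVec v = σ • C.mulVec (star (uᴴ.mulVec (C.mulVec (star v)))) := by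

  have hσ2 : σ * σ = 1 := by rcases hσ with h | h <;> simp [h]
  have hσstar : (starRingEnd ℂ) σ = σ := by rcases hσ with h | h <;> simp [h]
  have hσ0 : σ ≠ 0 := by rcases hσ with h | h <;> simp [h]
  have hsq : ∀ k, (Real.sqrt (lam k) : ℂ) * (Real.sqrt (lam k) : ℂ) = (lam k : ℂ) := by
    intro k
    rw [← Complex.ofReal_mul, Real.mul_self_sqrt (hpos k).le]
  have hsq0 : ∀ k, (Real.sqrt (lam k) : ℂ) ≠ 0 := by
    intro k
    simp [Real.sqrt_eq_zero', not_le, hpos k, (hpos k).le, ne_of_gt]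
  -- the matrix of u in the ζ basis
  set P : Matrix n n ℂ := Matrix.of (fun i k => ζ k i) with hPdef
  have hPHP : Pᴴ * P = 1 := by
    ext k l
    simpa [Matrix.mul_apply, Matrix.conjTranspose_apply, Matrix.one_apply, dotProduct,
      hPdef] using hζ k l
  have hPPH : P * Pᴴ = 1 := mul_eq_one_comm.mp hPHP
  set A : Matrix n n ℂ := Pᴴ * u * P with hAdef
  have hAentry : ∀ k l, A k l = star (ζ k) ⬝ᵥ u.mulVec (ζ l) := by
    intro k l
    simp [hAdef, Matrix.mul_apply, Matrix.conjTranspose_apply, dotProduct, Matrix.mulVec,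
      hPdef, Finset.mul_sum, Finset.sum_mul]
    rw [Finset.sum_comm]
    congr 1; funext i; congr 1; funext j; ring
  have hAHA : Aᴴ * A = 1 := by
    have hu1 : uᴴ * u = 1 := hu.1
    calc Aᴴ * A = Pᴴ * ((uᴴ * (P * Pᴴ)) * u) * P := by
          simp [hAdef, Matrix.conjTranspose_mul, Matrix.mul_assoc]
      _ = 1 := by rw [hPPH]; simp [hu1, Matrix.mul_assoc, hPHP]
  -- the flipped vector equation
  have heq : (∑ k, (Real.sqrt (lam k) : ℂ) • tens (u.mulVec (ζ k)) (ζ k))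
      = ∑ k, (Real.sqrt (lam k) : ℂ) • (σ • tens (ζ k) (u.mulVec (ζ k))) := by
    have h1 : Γ.mulVec Ω = ∑ k, (Real.sqrt (lam k) : ℂ) • (σ • tens (ζ k) (u.mulVec (ζ k))) := by
      rw [hΩ, show (Γ.mulVec (∑ k, (Real.sqrt (lam k) : ℂ) • tens (u.mulVec (ζ k)) (ζ k)))
          = ∑ k, (Real.sqrt (lam k) : ℂ) • Γ.mulVec (tens (u.mulVec (ζ k)) (ζ k)) from by
        rw [← Matrix.mulVecLin_apply, map_sum]
        simp [Matrix.mulVecLin_apply]]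
      simp only [hflip]
    rw [← h1, hfix, hΩ]
  -- contract with basis tensors
  have key : ∀ k l, (Real.sqrt (lam l) : ℂ) * A k l = σ * ((Real.sqrt (lam k) : ℂ) * A l k) := by
    intro k l
    have h := congrArg (fun f => star (tens (ζ k) (ζ l)) ⬝ᵥ f) heq
    simp only [dot_sum_smul, dotProduct_smul, dot_tens, hζ, smul_eq_mul] at h
    simp only [mul_ite, mul_one, mul_zero, ite_mul, zero_mul, Finset.sum_ite_eq,
      Finset.mem_univ, if_true] at h
    rw [hAentry k l, hAentry l k]
    linear_combination h
  -- u commutes with ρ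
  have hARA : A * Matrix.diagonal (fun k => (lam k : ℂ)) * Aᴴ
      = Matrix.diagonal (fun k => (lam k : ℂ)) := by
    ext k l
    have hterm : ∀ m, (A * Matrix.diagonal (fun k => (lam k : ℂ))) k m * Aᴴ m l
        = ((Real.sqrt (lam k) : ℂ) * (Real.sqrt (lam l) : ℂ)) * (star (A m l) * A m k) := by
      intro m
      have e1 := key k m
      have e2 : (Real.sqrt (lam m) : ℂ) * star (A l m)
          = σ * ((Real.sqrt (lam l) : ℂ) * star (A m l)) := by
        have h := congrArg (starRingEnd ℂ) (key l m)
        simp only [_root_.map_mul, Complex.conj_ofReal, hσstar] at h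
        simpa [Complex.star_def] using h
      rw [Matrix.mul_diagonal, Matrix.conjTranspose_apply, ← hsq m]
      linear_combination ((Real.sqrt (lam m) : ℂ) * star (A l m)) * e1
        + (σ * ((Real.sqrt (lam k) : ℂ) * A m k)) * e2
        + (((Real.sqrt (lam k) : ℂ) * A m k) * ((Real.sqrt (lam l) : ℂ) * star (A m l))) * hσ2
    rw [Matrix.mul_apply]
    simp only [hterm]
    rw [← Finset.mul_sum]
    have hsum' : ∑ m, star (A m l) * A m k = (Aᴴ * A) l k := by
      simp [Matrix.mul_apply, Matrix.conjTranspose_apply]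
    rw [hsum', hAHA]
    by_cases hkl : k = l
    · subst hkl; simp [Matrix.one_apply, hsq]
    · simp [Matrix.one_apply, Ne.symm hkl, Matrix.diagonal_apply_ne _ hkl]
  have hAR : A * Matrix.diagonal (fun k => (lam k : ℂ))
      = Matrix.diagonal (fun k => (lam k : ℂ)) * A := by
    calc A * Matrix.diagonal (fun k => (lam k : ℂ))
        = (A * Matrix.diagonal (fun k => (lam k : ℂ)) * Aᴴ) * A := by
          rw [Matrix.mul_assoc (A * _), hAHA, Matrix.mul_one]
      _ = Matrix.diagonal (fun k => (lam k : ℂ)) * A := by rw [hARA]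
  -- entrywise commutation gives the flip identity
  have hAflip : ∀ k l, A k l = σ * A l k := by
    intro k l
    by_cases h0 : A k l = 0
    · have h := key k l
      rw [h0, mul_zero] at h
      have hx : (Real.sqrt (lam k) : ℂ) * A l k = 0 := (mul_eq_zero.mp h.symm).resolve_left hσ0
      have : A l k = 0 := (mul_eq_zero.mp hx).resolve_left (hsq0 k)
      rw [h0, this, mul_zero]
    · have hcomm : (A * Matrix.diagonal (fun k => (lam k : ℂ))) k l
          = (Matrix.diagonal (fun k => (lam k : ℂ)) * A) k l := by rw [hAR]
      rw [Matrix.mul_diagonal, Matrix.diagonal_mul] at hcomm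
      have hlam : (lam l : ℂ) = (lam k : ℂ) :=
        mul_left_cancel₀ h0 (by linear_combination hcomm)
      have hlamR : lam l = lam k := by exact_mod_cast hlam
      have h := key k l
      rw [hlamR] at h
      apply mul_left_cancel₀ (hsq0 k)
      rw [h]; ring
  have hAs : A = σ • Aᵀ := by
    ext k l
    simp [Matrix.transpose_apply, hAflip k l]
  -- express C in terms of P
  have hCP : C = P * Pᵀ := by
    ext i j
    simp [hC, Matrix.sum_apply, Matrix.vecMulVec_apply, Matrix.mul_apply, hPdef,
      Matrix.transpose_apply]
  have hCstar : C.map star = Pᴴᵀ * Pᴴ := by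
    ext i j
    simp [hC, Matrix.map_apply, Matrix.sum_apply, Matrix.vecMulVec_apply, Matrix.mul_apply,
      hPdef, Matrix.transpose_apply, Matrix.conjTranspose_apply, star_sum]
  -- main matrix identity
  have hmain : u = σ • (C * uᵀ * C.map star) := by
    have hu' : u = P * A * Pᴴ := by
      rw [hAdef]
      calc u = (P * Pᴴ) * u * (P * Pᴴ) := by rw [hPPH]; simp
        _ = P * (Pᴴ * u * P) * Pᴴ := by simp only [Matrix.mul_assoc]
    have hAT : C * uᵀ * C.map star = P * Aᵀ * Pᴴ := by
      rw [hCstar, hCP, hAdef]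
      simp only [Matrix.transpose_mul, Matrix.mul_assoc]
    rw [hAT]
    conv_lhs => rw [hu', hAs]
    simp [Matrix.mul_smul, Matrix.smul_mul]
  -- conclude
  intro v
  have hstar : ∀ (M : Matrix n n ℂ) (x : n → ℂ),
      star (M.mulVec x) = (M.map star).mulVec (star x) := by
    intro M x
    funext i
    simp [Matrix.mulVec, dotProduct, Matrix.map_apply, star_sum, star_mul', mul_comm]
  have huH : uᴴ.map star = uᵀ := by
    ext i j
    simp [Matrix.map_apply, Matrix.conjTranspose_apply, Matrix.transpose_apply]
  rw [hstar, huH, hstar, star_star]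
  simp only [Matrix.mulVec_mulVec, ← Matrix.mul_assoc, ← Matrix.smul_mulVec]
  rw [← hmain]
end

section
/- Let ρ be a faithful positive operator on a finite-dimensional complex Hilbert space H, θ an anti-unitary on H, and suppose ρ^{-1/2} θ ρ^{1/2} θ = b·1 for some b ∈ ℂ. Then θ² is a scalar of modulus 1, and in fact θ² = ±1. -/
open Matrix
open scoped ComplexOrder

/-! Let `C = A.map star` be the matrix of `θ`, so that `θ²` has matrix `U = A * C` and
`θ* ρ^{1/2} θ` has the positive definite matrix `Q = Cᴴ * r.map star * C`. The hypothesis reads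
`U * Q = b • r`, a polar decomposition of `b • r`; uniqueness of positive square roots gives
`Q = ‖b‖ • r`, hence `U = (b / ‖b‖) • 1`. Since `θ` commutes with `θ²` but conjugates scalars,
this unimodular scalar is real, i.e. `±1`. -/

namespace Matrix

variable {n 𝕜 : Type*} [Fintype n] [DecidableEq n] [RCLike 𝕜]

theorem PosSemidef.eq_norm_smul_of_unitary_mul_eq_smul {U Q P : Matrix n n 𝕜} {b : 𝕜}
    (hU : U ∈ unitaryGroup n 𝕜) (hQ : Q.PosSemidef) (hP : P.PosSemidef) (h : U * Q = b • P) :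
    Q = (‖b‖ : 𝕜) • P := by
  open scoped MatrixOrder in
  refine (CFC.sq_eq_sq_iff Q _ hQ.nonneg (hP.smul (by positivity)).nonneg).mp ?_
  have hUU : Uᴴ * U = 1 := mem_unitaryGroup_iff'.mp hU
  calc Q ^ 2 = (U * Q)ᴴ * (U * Q) := by
        rw [conjTranspose_mul, mul_assoc, ← mul_assoc Uᴴ, hUU, one_mul, hQ.isHermitian.eq, sq]
    _ = ((‖b‖ : 𝕜) • P) ^ 2 := by
        rw [h, conjTranspose_smul, hP.isHermitian.eq, smul_mul_smul_comm, smul_pow, sq, sq,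
          RCLike.star_def, RCLike.conj_mul, sq]

theorem eq_smul_one_of_unitary_mul_posDef_eq_smul [Nonempty n] {U Q P : Matrix n n 𝕜} {b : 𝕜}
    (hU : U ∈ unitaryGroup n 𝕜) (hQ : Q.PosDef) (hP : P.PosDef) (h : U * Q = b • P) :
    ∃ s : 𝕜, ‖s‖ = 1 ∧ U = s • 1 := by
  have hQP := hQ.posSemidef.eq_norm_smul_of_unitary_mul_eq_smul hU hP.posSemidef h
  have hb : b ≠ 0 := by
    rintro rfl
    rw [norm_zero, RCLike.ofReal_zero, zero_smul] at hQP
    exact hQ.isUnit.ne_zero hQP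
  have hb_norm : (‖b‖ : 𝕜) ≠ 0 := by exact_mod_cast norm_ne_zero_iff.mpr hb
  refine ⟨b / ‖b‖, by simp [norm_div, hb], ?_⟩
  have hUP : U * P = (b / ‖b‖) • P := by
    rw [hQP, mul_smul_comm] at h
    rw [div_eq_inv_mul, ← smul_smul, ← h, smul_smul, inv_mul_cancel₀ hb_norm, one_smul]
  rwa [← smul_one_mul, hP.isUnit.mul_left_inj] at hUP

theorem star_eq_of_mul_map_star_eq_smul_one [Nonempty n] {A : Matrix n n 𝕜} {s : 𝕜} (hs : s ≠ 0)
    (h : A * A.map star = s • 1) : star s = s := by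
  have hconj : A.map star * A = star s • 1 := by
    have := congrArg (Matrix.map · (starRingEnd 𝕜)) h
    rw [Matrix.map_mul, map_smul' _ _ _ (map_mul _), Matrix.map_one _ (map_zero _) (map_one _),
      Matrix.map_map] at this
    simpa [Function.comp_def] using this
  have hA : A.map star ≠ 0 := by
    rintro h0
    rw [h0, mul_zero, eq_comm, smul_eq_zero] at h
    exact h.elim hs one_ne_zero
  refine smul_left_injective 𝕜 hA ?_
  calc star s • A.map star = A.map star * A * A.map star := by rw [hconj, smul_one_mul]
    _ = s • A.map star := by rw [mul_assoc, h, mul_smul_one]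

end Matrix

theorem RCLike.eq_one_or_eq_neg_one_of_star_eq_of_norm_eq_one {𝕜 : Type*} [RCLike 𝕜] {s : 𝕜}
    (hstar : star s = s) (hnorm : ‖s‖ = 1) : s = 1 ∨ s = -1 := by
  refine mul_self_eq_one_iff.mp ?_
  calc s * s = star s * s := by rw [hstar]
    _ = 1 := by rw [RCLike.star_def, RCLike.conj_mul, hnorm]; norm_num

theorem stmt10_general {n : Type*} [Fintype n] [DecidableEq n] [Nonempty n]
    (r A : Matrix n n ℂ) (hr : r.PosDef)
    (hA : A ∈ Matrix.unitaryGroup n ℂ)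
    (b : ℂ) (hb : r⁻¹ * A * r.map star * A.map star = b • 1) :
    (∃ s : ℂ, ‖s‖ = 1 ∧ A * A.map star = s • 1) ∧
      (A * A.map star = 1 ∨ A * A.map star = -1) := by
  set C := A.map star
  have hC : C ∈ unitaryGroup n ℂ := map_star_mem_unitaryGroup_iff.mpr hA
  have hr_conj : (r.map star).PosDef := by
    rw [← conjTranspose_transpose, hr.isHermitian.eq]
    exact hr.transpose
  have hQ : (star C * r.map star * C).PosDef :=
    (IsUnit.posDef_star_left_conjugate_iff (Unitary.isUnit_coe (U := ⟨C, hC⟩))).mpr hr_conj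
  have hUQ : A * C * (star C * r.map star * C) = b • r :=
    calc A * C * (star C * r.map star * C) = r * (r⁻¹ * A * r.map star * C) := by
          simp only [mul_assoc, mul_nonsing_inv_cancel_left _ _ hr.det_pos.ne'.isUnit]
          rw [← mul_assoc C, mem_unitaryGroup_iff.mp hC, one_mul]
      _ = b • r := by rw [hb, mul_smul_one]
  obtain ⟨s, hs, hAC⟩ := eq_smul_one_of_unitary_mul_posDef_eq_smul
    (Submonoid.mul_mem _ hA hC) hQ hr hUQ
  have hstar := star_eq_of_mul_map_star_eq_smul_one (by rintro rfl; simp at hs) hAC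
  refine ⟨⟨s, hs, hAC⟩, ?_⟩
  rcases RCLike.eq_one_or_eq_neg_one_of_star_eq_of_norm_eq_one hstar hs with rfl | rfl
  · exact .inl (by rw [hAC, one_smul])
  · exact .inr (by rw [hAC, neg_smul, one_smul])

/-- Let `ρ` be a faithful (positive-definite) operator with positive square root
`r = ρ^{1/2}`, and `θ` an anti-unitary (with matrix `A`, `θ v = A (star v)`).
If `ρ^{-1/2} θ ρ^{1/2} θ = b • 1` for some `b ∈ ℂ` (the matrix of the left-hand
side being `r⁻¹ * A * (map star r) * (map star A)`), then `θ²` (with matrix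
`A * map star A`) is a modulus-one scalar, and in fact `θ² = ±1`. -/
theorem stmt10 {n : Type*} [Fintype n] [DecidableEq n] [Nonempty n]
    (ρ r A : Matrix n n ℂ) (hρ : ρ.PosDef) (hr : r.PosDef) (hr2 : r * r = ρ)
    (hA : A ∈ Matrix.unitaryGroup n ℂ)
    (b : ℂ) (hb : r⁻¹ * A * r.map star * A.map star = b • 1) :
    (∃ s : ℂ, ‖s‖ = 1 ∧ A * A.map star = s • 1) ∧
      (A * A.map star = 1 ∨ A * A.map star = -1) :=
  stmt10_general r A hr hA b hb
end

section
/- Let v = (v₁,…,v_d) be a d-tuple of k×k complex matrices with Σ_μ v_μ v_μ* = 1, and let ρ be a positive-definite k×k density matrix with Σ_μ v_μ* ρ v_μ = ρ. Let c be an anti-unitary conjugation commuting with ρ (cρc = ρ), set v̄_μ := c v_μ c and ṽ_μ := ρ^{-1/2} (v̄_μ)* ρ^{1/2}. Then Σ_μ ṽ_μ ṽ_μ* = 1 and Σ_μ ṽ_μ* ρ ṽ_μ = ρ. -/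
open Matrix
open scoped ComplexOrder

/-- Let `v` be a normalized tuple (`Σ v_μ v_μ* = 1`) with faithful invariant density
matrix `ρ` (`Σ v_μ* ρ v_μ = ρ`), `r = ρ^{1/2}` its positive square root, and `c` an
anti-unitary conjugation (matrix `C`, unitary, `c² = 1`) commuting with `ρ`
(`c ρ c = ρ`). With `v̄_μ = c v_μ c` (matrix `C * (map star v_μ) * (map star C)`) and
`ṽ_μ = ρ^{-1/2} (v̄_μ)* ρ^{1/2}`, one has `Σ ṽ_μ ṽ_μ* = 1` and `Σ ṽ_μ* ρ ṽ_μ = ρ`. -/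
theorem stmt11 {k ι : Type*} [Fintype k] [DecidableEq k] [Fintype ι]
    (v : ι → Matrix k k ℂ) (hnorm : ∑ μ, v μ * (v μ)ᴴ = 1)
    (ρ r : Matrix k k ℂ) (hρ : ρ.PosDef)
    (hinv : ∑ μ, (v μ)ᴴ * ρ * v μ = ρ)
    (hr : r.PosDef) (hr2 : r * r = ρ)
    (C : Matrix k k ℂ) (hC : C ∈ Matrix.unitaryGroup k ℂ)
    (hC2 : C * C.map star = 1)
    (hCρ : C * ρ.map star * C.map star = ρ)
    (vbar vt : ι → Matrix k k ℂ)
    (hvbar : ∀ μ, vbar μ = C * (v μ).map star * C.map star)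
    (hvt : ∀ μ, vt μ = r⁻¹ * (vbar μ)ᴴ * r) :
    (∑ μ, vt μ * (vt μ)ᴴ = 1) ∧ (∑ μ, (vt μ)ᴴ * ρ * vt μ = ρ) := by
  -- basic facts
  have hrH : star r = r := hr.isHermitian
  have hρH : star ρ = ρ := hρ.isHermitian
  have hrdet : IsUnit r.det := hr.det_pos.ne'.isUnit
  have hri : r⁻¹ * r = 1 := nonsing_inv_mul r hrdet
  have hir : r * r⁻¹ = 1 := mul_nonsing_inv r hrdet
  have hriH : star (r⁻¹) = r⁻¹ := by
    show (r⁻¹)ᴴ = r⁻¹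
    rw [conjTranspose_nonsing_inv]
    exact congrArg _ hrH
  -- map star = star ∘ transpose
  have hms : ∀ X : Matrix k k ℂ, X.map star = star (Xᵀ) := by
    intro X; ext i j
    simp [Matrix.map_apply, Matrix.star_apply]
  have hTstar : ∀ X : Matrix k k ℂ, (star X)ᵀ = star (Xᵀ) := by
    intro X; ext i j
    simp [Matrix.star_apply]
  -- unitarity facts
  have hC1 : star C * C = 1 := hC.1
  have hC1' : ∀ X : Matrix k k ℂ, star C * (C * X) = X := by
    intro X; rw [← mul_assoc, hC1, one_mul]
  have hinv' : ∑ μ, star (v μ) * ρ * v μ = ρ := hinv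
  have hnorm' : ∑ μ, v μ * star (v μ) = 1 := hnorm
  have hss : ∀ X : Matrix k k ℂ, star (Xᴴ) = X := fun X => star_star X
  -- C is symmetric: star (Cᵀ) = star C
  have hCsymm : star (Cᵀ) = star C := by
    have h2 : C * star (Cᵀ) = 1 := by rw [← hms]; exact hC2
    calc star (Cᵀ) = star C * (C * star (Cᵀ)) := (hC1' _).symm
      _ = star C := by rw [h2, mul_one]
  -- rewrite hCρ
  have hρT : C * ρᵀ * star C = ρ := by
    have h := hCρ
    rw [hms, hms, hCsymm, ← hTstar, hρH] at h
    exact h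
  have hmidρ : star C * ρ * C = ρᵀ := by
    calc star C * ρ * C = star C * (C * ρᵀ * star C) * C := by rw [hρT]
      _ = ρᵀ := by
          rw [mul_assoc C, hC1', mul_assoc, hC1, mul_one]
  -- vbar in star/transpose form
  have hvb : ∀ μ, vbar μ = C * star ((v μ)ᵀ) * star C := by
    intro μ; rw [hvbar, hms, hms, hCsymm]
  have hvbH : ∀ μ, star (vbar μ) = C * (v μ)ᵀ * star C := by
    intro μ
    rw [hvb]
    simp only [Matrix.star_mul, star_star]
    rw [← mul_assoc]
  -- key 1 : ∑ vbarᴴ ρ vbar = ρ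
  have key1 : ∑ μ, (vbar μ)ᴴ * ρ * vbar μ = ρ := by
    have hterm : ∀ μ, (vbar μ)ᴴ * ρ * vbar μ
        = C * (star (v μ) * ρ * v μ)ᵀ * star C := by
      intro μ
      show star (vbar μ) * ρ * vbar μ = _
      rw [hvbH, hvb]
      calc C * (v μ)ᵀ * star C * ρ * (C * star ((v μ)ᵀ) * star C)
          = C * ((v μ)ᵀ * (star C * ρ * C) * star ((v μ)ᵀ)) * star C := by
            simp only [mul_assoc]
        _ = C * ((v μ)ᵀ * ρᵀ * star ((v μ)ᵀ)) * star C := by rw [hmidρ]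
        _ = C * (star (v μ) * ρ * v μ)ᵀ * star C := by
            rw [transpose_mul, transpose_mul, hTstar]
            simp only [mul_assoc]
    calc ∑ μ, (vbar μ)ᴴ * ρ * vbar μ
        = C * (∑ μ, (star (v μ) * ρ * v μ)ᵀ) * star C := by
          rw [Finset.mul_sum, Finset.sum_mul]
          exact Finset.sum_congr rfl fun μ _ => hterm μ
      _ = C * (∑ μ, star (v μ) * ρ * v μ)ᵀ * star C := by
          rw [Matrix.transpose_sum]
      _ = C * ρᵀ * star C := by rw [hinv']
      _ = ρ := hρT
  -- key 2 : ∑ vbar vbarᴴ = 1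
  have key2 : ∑ μ, vbar μ * (vbar μ)ᴴ = 1 := by
    have hterm : ∀ μ, vbar μ * (vbar μ)ᴴ
        = C * (v μ * star (v μ))ᵀ * star C := by
      intro μ
      show vbar μ * star (vbar μ) = _
      rw [hvbH, hvb]
      calc C * star ((v μ)ᵀ) * star C * (C * (v μ)ᵀ * star C)
          = C * (star ((v μ)ᵀ) * (star C * (C * ((v μ)ᵀ * star C)))) := by
            simp only [mul_assoc]
        _ = C * (star ((v μ)ᵀ) * ((v μ)ᵀ * star C)) := by rw [hC1']
        _ = C * (v μ * star (v μ))ᵀ * star C := by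
            rw [transpose_mul, hTstar]
            simp only [mul_assoc]
    calc ∑ μ, vbar μ * (vbar μ)ᴴ
        = C * (∑ μ, (v μ * star (v μ))ᵀ) * star C := by
          rw [Finset.mul_sum, Finset.sum_mul]
          exact Finset.sum_congr rfl fun μ _ => hterm μ
      _ = C * (∑ μ, v μ * star (v μ))ᵀ * star C := by rw [Matrix.transpose_sum]
      _ = C * star C := by rw [hnorm', transpose_one, mul_one]
      _ = 1 := hC.2
  -- conjTranspose of vt
  have hvtH : ∀ μ, (vt μ)ᴴ = r * vbar μ * r⁻¹ := by
    intro μ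
    show star (vt μ) = _
    rw [hvt]
    simp only [Matrix.star_mul, hss, hrH, hriH]
    rw [← mul_assoc]
  constructor
  · calc ∑ μ, vt μ * (vt μ)ᴴ
        = ∑ μ, r⁻¹ * ((vbar μ)ᴴ * ρ * vbar μ) * r⁻¹ := by
          refine Finset.sum_congr rfl fun μ _ => ?_
          rw [hvtH, hvt, ← hr2]
          simp only [mul_assoc]
      _ = r⁻¹ * (∑ μ, (vbar μ)ᴴ * ρ * vbar μ) * r⁻¹ := by
          rw [Finset.mul_sum, Finset.sum_mul]
      _ = 1 := by rw [key1, ← hr2, ← mul_assoc, hri, one_mul, hir]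
  · have hmid : r⁻¹ * ρ * r⁻¹ = 1 := by
      rw [← hr2, ← mul_assoc, hri, one_mul, hir]
    calc ∑ μ, (vt μ)ᴴ * ρ * vt μ
        = ∑ μ, r * (vbar μ * (r⁻¹ * ρ * r⁻¹) * (vbar μ)ᴴ) * r := by
          refine Finset.sum_congr rfl fun μ _ => ?_
          rw [hvtH, hvt]
          simp only [mul_assoc]
      _ = ∑ μ, r * (vbar μ * (vbar μ)ᴴ) * r := by
          refine Finset.sum_congr rfl fun μ _ => ?_
          rw [hmid, mul_one]
      _ = r * (∑ μ, vbar μ * (vbar μ)ᴴ) * r := by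
          rw [Finset.mul_sum, Finset.sum_mul]
      _ = ρ := by rw [key2, mul_one, hr2]
end

section
/- Let v ∈ M_k(ℂ)^d be primitive, i.e., the span of all length-l products v_{μ₀}⋯v_{μ_{l−1}} equals M_k(ℂ) for all sufficiently large l. Suppose e^{it} ∈ ℂ with |e^{it}| = 1, ρ is positive definite, and θ is an anti-unitary on ℂ^k such that v_μ = e^{it} ρ^{-1/2} θ v_μ* θ* ρ^{1/2} for all μ. Then e^{2it} = 1 and ρ^{-1/2} θ ρ^{1/2} θ is a scalar multiple of the identity. -/
open Matrix
open scoped ComplexOrder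

/-!
Squaring the intertwining relation `v = z • P vᵀ Q` (with `P = ρ^{-1/2} A`, `Q = P⁻¹`) gives
`v = z² • T v T⁻¹` with `T = P Qᵀ`, i.e. each generator lies in the `z²`-twisted commutant of `T`.
Twisted commutants are submodules and multiply like a graded algebra, so every length-`l` word in
the generators lies in the `z^(2l)`-twisted commutant, and by primitivity so does every matrix.
Applied to the identity matrix for two consecutive lengths this forces `z² = 1`; then `T` is
central in `M_k(ℂ)`, hence scalar.
-/

def twistedCommutant {R A : Type*} [CommSemiring R] [Semiring A] [Algebra R A] (c : R) (t : A) :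
    Submodule R A where
  carrier := {a | a * t = c • (t * a)}
  add_mem' {a b} ha hb := by
    simp only [Set.mem_ofPred_eq, add_mul, mul_add, smul_add] at *
    rw [ha, hb]
  zero_mem' := by simp
  smul_mem' s a ha := by
    simp only [Set.mem_ofPred_eq, smul_mul_assoc, mul_smul_comm] at *
    rw [ha, smul_comm]

section TwistedCommutant

variable {R A : Type*} [CommSemiring R] [Semiring A] [Algebra R A] {c : R} {t : A}

theorem mem_twistedCommutant {a : A} : a ∈ twistedCommutant c t ↔ a * t = c • (t * a) :=
  Iff.rfl

theorem mul_mem_twistedCommutant {d : R} {a b : A} (ha : a ∈ twistedCommutant c t)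
    (hb : b ∈ twistedCommutant d t) : a * b ∈ twistedCommutant (c * d) t := by
  rw [mem_twistedCommutant] at *
  rw [mul_assoc, hb, mul_smul_comm, ← mul_assoc, ha, smul_mul_assoc, smul_smul, mul_assoc,
    mul_comm d]

theorem list_prod_mem_twistedCommutant {l : List A} (hl : ∀ a ∈ l, a ∈ twistedCommutant c t) :
    l.prod ∈ twistedCommutant (c ^ l.length) t := by
  induction l with
  | nil => simp [mem_twistedCommutant]
  | cons a l ih =>
    rw [List.prod_cons, List.length_cons, pow_succ']
    exact mul_mem_twistedCommutant (hl a List.mem_cons_self)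
      (ih fun b hb => hl b (List.mem_cons_of_mem a hb))

theorem twistedCommutant_pow_eq_top_of_span_words_eq_top {ι : Type*} {v : ι → A}
    (hv : ∀ i, v i ∈ twistedCommutant c t) {l : ℕ}
    (hspan : Submodule.span R
      {M : A | ∃ μ : Fin l → ι, M = (List.ofFn fun i => v (μ i)).prod} = ⊤) :
    twistedCommutant (c ^ l) t = ⊤ := by
  rw [eq_top_iff, ← hspan, Submodule.span_le]
  rintro _ ⟨μ, rfl⟩
  simpa using list_prod_mem_twistedCommutant (l := List.ofFn fun i => v (μ i)) (by simp [hv])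

end TwistedCommutant

theorem eq_one_of_twistedCommutant_pow_eq_top {K A : Type*} [Field K] [Ring A] [Algebra K A]
    {c : K} {t : A} (ht : t ≠ 0) {l : ℕ}
    (hl : twistedCommutant (c ^ l) t = ⊤) (hl' : twistedCommutant (c ^ (l + 1)) t = ⊤) :
    c = 1 := by
  have pow_eq_one (m : ℕ) (hm : twistedCommutant (c ^ m) t = ⊤) : c ^ m = 1 := by
    have h1 : (1 : A) ∈ twistedCommutant (c ^ m) t := hm ▸ Submodule.mem_top
    rw [mem_twistedCommutant, one_mul, mul_one] at h1
    exact smul_left_injective K ht (by simpa using h1.symm)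
  simpa [pow_succ, pow_eq_one l hl] using pow_eq_one (l + 1) hl'

section TransposeConjugation

variable {n K : Type*} [Fintype n] [DecidableEq n] [CommRing K] {P Q : Matrix n n K}

theorem transpose_mul_mul_mul_transpose_eq_one (hQP : Q * P = 1) : Pᵀ * Q * (P * Qᵀ) = 1 := by
  rw [Matrix.mul_assoc, ← Matrix.mul_assoc Q, hQP, Matrix.one_mul, ← transpose_mul, hQP,
    transpose_one]

theorem mem_twistedCommutant_of_eq_smul_mul_transpose_mul {X : Matrix n n K} {z : K}
    (hQP : Q * P = 1) (hX : X = z • (P * Xᵀ * Q)) : X ∈ twistedCommutant (z ^ 2) (P * Qᵀ) := by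
  have hX2 : X = z ^ 2 • (P * Qᵀ * X * (Pᵀ * Q)) := by
    conv_lhs => rw [hX, hX]
    simp only [transpose_smul, transpose_mul, transpose_transpose, Matrix.mul_smul,
      Matrix.smul_mul, smul_smul, Matrix.mul_assoc, sq]
  rw [mem_twistedCommutant]
  conv_lhs => rw [hX2]
  rw [Matrix.smul_mul, Matrix.mul_assoc, transpose_mul_mul_mul_transpose_eq_one hQP,
    Matrix.mul_one]

end TransposeConjugation

theorem stmt12_general {k ι : Type*} [Fintype k] [DecidableEq k] [Nonempty k]
    (v : ι → Matrix k k ℂ)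
    (hprim : ∃ L : ℕ, ∀ l ≥ L,
      Submodule.span ℂ
        {M : Matrix k k ℂ | ∃ μ : Fin l → ι, M = (List.ofFn fun i => v (μ i)).prod}
        = ⊤)
    (z : ℂ)
    (r : Matrix k k ℂ) (hr : r.PosDef)
    (A : Matrix k k ℂ) (hA : A ∈ Matrix.unitaryGroup k ℂ)
    (hrel : ∀ μ, v μ = z • (r⁻¹ * (A * (v μ)ᵀ * Aᴴ) * r)) :
    z ^ 2 = 1 ∧ ∃ b : ℂ, r⁻¹ * A * r.map star * A.map star = b • 1 := by
  set T := r⁻¹ * A * r.map star * A.map star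
  have hQP : Aᴴ * r * (r⁻¹ * A) = 1 := by
    rw [Matrix.mul_assoc, ← Matrix.mul_assoc r, mul_nonsing_inv _ (hr.isUnit.map detMonoidHom),
      Matrix.one_mul]
    exact mem_unitaryGroup_iff'.mp hA
  have hrT : rᵀ = r.map star := by rw [← conjTranspose_transpose, hr.isHermitian.eq]
  have hT : r⁻¹ * A * (Aᴴ * r)ᵀ = T := by
    rw [transpose_mul, hrT, ← Matrix.mul_assoc]
    rfl
  have hv (μ : ι) : v μ ∈ twistedCommutant (z ^ 2) T :=
    hT ▸ mem_twistedCommutant_of_eq_smul_mul_transpose_mul hQP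
      (by simpa only [Matrix.mul_assoc] using hrel μ)
  have hT0 : T ≠ 0 := hT ▸ right_ne_zero_of_mul_eq_one (transpose_mul_mul_mul_transpose_eq_one hQP)
  obtain ⟨L, hL⟩ := hprim
  have htop (l : ℕ) (hl : L ≤ l) := twistedCommutant_pow_eq_top_of_span_words_eq_top hv (hL l hl)
  have hz : z ^ 2 = 1 :=
    eq_one_of_twistedCommutant_pow_eq_top hT0 (htop L le_rfl) (htop (L + 1) L.le_succ)
  refine ⟨hz, ?_⟩
  have hcenter : T ∈ Set.center (Matrix k k ℂ) := by
    refine Semigroup.mem_center_iff.mpr fun M => ?_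
    simpa [hz, mem_twistedCommutant] using (htop L le_rfl).ge (Submodule.mem_top (x := M))
  obtain ⟨b, hb⟩ := center_eq_range (n := k) (R := ℂ) ▸ hcenter
  exact ⟨b, by rw [← hb, scalar_apply, smul_one_eq_diagonal]⟩

/-- Let `v ∈ M_k(ℂ)^d` be primitive (the span of length-`l` products is all of
`M_k(ℂ)` for all large `l`), `z` a modulus-one scalar, `ρ` positive definite with
positive square root `r = ρ^{1/2}`, and `θ` an anti-unitary (matrix `A`, so that
`θ x* θ*` has matrix `A * xᵀ * Aᴴ`) with `v_μ = z ρ^{-1/2} θ v_μ* θ* ρ^{1/2}` for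
all `μ`. Then `z² = 1` and `ρ^{-1/2} θ ρ^{1/2} θ` (matrix
`r⁻¹ * A * map star r * map star A`) is a scalar multiple of the identity. -/
theorem stmt12 {k ι : Type*} [Fintype k] [DecidableEq k] [Nonempty k] [Fintype ι]
    (v : ι → Matrix k k ℂ)
    (hprim : ∃ L : ℕ, ∀ l ≥ L,
      Submodule.span ℂ
        {M : Matrix k k ℂ | ∃ μ : Fin l → ι, M = (List.ofFn fun i => v (μ i)).prod}
        = ⊤)
    (z : ℂ) (hz : ‖z‖ = 1)
    (ρ r : Matrix k k ℂ) (hρ : ρ.PosDef) (hr : r.PosDef) (hr2 : r * r = ρ)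
    (A : Matrix k k ℂ) (hA : A ∈ Matrix.unitaryGroup k ℂ)
    (hrel : ∀ μ, v μ = z • (r⁻¹ * (A * (v μ)ᵀ * Aᴴ) * r)) :
    z ^ 2 = 1 ∧ ∃ b : ℂ, r⁻¹ * A * r.map star * A.map star = b • 1 :=
  stmt12_general v hprim z r hr A hA hrel
end

section
/- Let v, w ∈ M_k(ℂ)^d be two primitive normalized tuples with faithful invariant density matrices ρ_v, ρ_w, related by v_μ = e^{iλ} V* w_μ V for a unitary V and phase e^{iλ}, with ρ_w = V ρ_v V*. Suppose θ, ξ are anti-unitaries on ℂ^k and phases e^{it}, e^{iu} satisfy v_μ = e^{it} ρ_v^{-1/2} θ v_μ* θ* ρ_v^{1/2} and w_μ = e^{iu} ρ_w^{-1/2} ξ w_μ* ξ* ρ_w^{1/2} for all μ. Then ξ* V θ V* is a scalar of modulus 1, and consequently V θ² V* = ξ²; in particular the sign of θ² equals the sign of ξ². -/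
/-!
Conjugating the θ-relation for `v` by `V` gives a relation of the same shape for `w`, with the
anti-unitary `VθV*` in place of `θ`; the density square roots match because positive square roots
are unique, so `ρ_w^{1/2} = V ρ_v^{1/2} V*`. Comparing with the ξ-relation, the unitary
`F = (B* C)ᵀ` (where `C = V A Vᵀ` is the matrix of `VθV*`) satisfies `F w_μ = c w_μ F` for a
single phase `c`, hence `F P = cˡ P F` for every product `P` of `l` letters. By primitivity these
products span all matrices, so `cˡ = 1` (take `P = 1`) and `F` is central: a scalar `r` of modulus
one. Then `ξ*VθV*` is the scalar `r̄`, and `C = r B` gives `(VθV*)² = |r|² ξ² = ξ²`.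
-/

open Matrix
open scoped ComplexOrder

section TwistedCommutation

variable {𝕜 R : Type*} [Field 𝕜] [Ring R] [Algebra 𝕜 R] {F : R} {c : 𝕜}

theorem mul_list_prod_eq_pow_smul :
    ∀ {l : List R}, (∀ x ∈ l, F * x = c • (x * F)) →
      F * l.prod = c ^ l.length • (l.prod * F)
  | [], _ => by simp
  | x :: l, h => by
    rw [List.prod_cons, ← mul_assoc, h x List.mem_cons_self, smul_mul_assoc, mul_assoc,
      mul_list_prod_eq_pow_smul fun y hy => h y (List.mem_cons_of_mem x hy), mul_smul_comm,
      smul_smul, List.length_cons, pow_succ', mul_assoc]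

theorem mul_eq_smul_mul_of_span_eq_top {S : Set R} (hS : Submodule.span 𝕜 S = ⊤)
    (h : ∀ x ∈ S, F * x = c • (x * F)) (M : R) : F * M = c • (M * F) := by
  induction (hS ▸ Submodule.mem_top : M ∈ Submodule.span 𝕜 S) using Submodule.span_induction with
  | mem x hx => exact h x hx
  | zero => simp
  | add x y _ _ hx hy => rw [mul_add, add_mul, smul_add, hx, hy]
  | smul a x _ hx => rw [mul_smul_comm, smul_mul_assoc, hx, smul_comm]

theorem mem_center_of_mul_eq_smul_mul {ι : Type*} {w : ι → R} {l : ℕ}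
    (hspan : Submodule.span 𝕜
      {M : R | ∃ μ : Fin l → ι, M = (List.ofFn fun i => w (μ i)).prod} = ⊤)
    (hF : F ≠ 0) (h : ∀ μ, F * w μ = c • (w μ * F)) : F ∈ Set.center R := by
  have hall := mul_eq_smul_mul_of_span_eq_top (c := c ^ l) hspan <| by
    rintro _ ⟨μ, rfl⟩
    simpa using mul_list_prod_eq_pow_smul (F := F) (l := List.ofFn fun i => w (μ i))
      (by simp [h])
  have hc : c ^ l = 1 := by
    have hF1 : F = c ^ l • F := by simpa using hall 1
    have hsub : (c ^ l - 1) • F = 0 := by rw [sub_smul, one_smul, ← hF1, sub_self]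
    exact sub_eq_zero.mp ((smul_eq_zero.mp hsub).resolve_right hF)
  refine Semigroup.mem_center_iff.mpr fun M => ?_
  rw [hall M, hc, one_smul]

end TwistedCommutation

theorem Matrix.map_star_mul {m n o α : Type*} [Fintype n] [CommSemiring α] [StarRing α]
    (X : Matrix m n α) (Y : Matrix n o α) :
    (X * Y).map star = X.map star * Y.map star :=
  Matrix.map_mul (f := starRingEnd α)

theorem Matrix.map_star_conjTranspose_mul_mul_mul_transpose {k α : Type*} [Fintype k]
    [CommSemiring α] [StarRing α] (B V A : Matrix k k α) :
    (Bᴴ * (V * A * Vᵀ)).map star = Bᵀ * V.map star * A.map star * Vᴴ := by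
  rw [map_star_mul, map_star_mul, map_star_mul, ← conjTranspose_transpose Bᴴ,
    conjTranspose_conjTranspose, show Vᵀ.map star = Vᴴ from rfl]
  simp only [mul_assoc]

theorem ne_zero_of_mem_unitary {R : Type*} [Semiring R] [StarRing R] [Nontrivial R] {U : R}
    (hU : U ∈ unitary R) : U ≠ 0 := fun h0 =>
  zero_ne_one (α := R) (by simpa [h0] using Unitary.mul_star_self_of_mem hU)

theorem smul_mul_map_star_smul {𝕜 k : Type*} [RCLike 𝕜] [Fintype k] {r : 𝕜} (hr : ‖r‖ = 1)
    (B : Matrix k k 𝕜) : r • B * (r • B).map star = B * B.map star := by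
  rw [Matrix.map_smul' _ _ _ star_mul', Matrix.smul_mul, Matrix.mul_smul, smul_smul,
    show r * star r = 1 by rw [← starRingEnd_apply, RCLike.mul_conj, hr]; norm_num, one_smul]

section UnitaryConjugation

variable {𝕜 k : Type*} [RCLike 𝕜] [Fintype k] [DecidableEq k] {V : Matrix k k 𝕜}

theorem Matrix.conjTranspose_mul_self_of_mem_unitaryGroup (hV : V ∈ unitaryGroup k 𝕜) :
    Vᴴ * V = 1 :=
  Unitary.star_mul_self_of_mem hV

theorem Matrix.mul_conjTranspose_self_of_mem_unitaryGroup (hV : V ∈ unitaryGroup k 𝕜) :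
    V * Vᴴ = 1 :=
  Unitary.mul_star_self_of_mem hV

theorem Matrix.conjTranspose_mul_cancel_left_of_mem_unitaryGroup (hV : V ∈ unitaryGroup k 𝕜)
    (X : Matrix k k 𝕜) : Vᴴ * (V * X) = X := by
  rw [← mul_assoc, conjTranspose_mul_self_of_mem_unitaryGroup hV, one_mul]

theorem Matrix.mul_conjTranspose_cancel_left_of_mem_unitaryGroup (hV : V ∈ unitaryGroup k 𝕜)
    (X : Matrix k k 𝕜) : V * (Vᴴ * X) = X := by
  rw [← mul_assoc, mul_conjTranspose_self_of_mem_unitaryGroup hV, one_mul]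

open scoped MatrixOrder in
theorem Matrix.PosSemidef.eq_conj_of_mul_self_eq {r s : Matrix k k 𝕜} (hr : r.PosSemidef)
    (hs : s.PosSemidef) (hV : V ∈ unitaryGroup k 𝕜) (h : s * s = V * (r * r) * Vᴴ) :
    s = V * r * Vᴴ := by
  refine (CFC.mul_self_eq_mul_self_iff s (V * r * Vᴴ) hs.nonneg
    (hr.mul_mul_conjTranspose_same V).nonneg).mp ?_
  rw [h]
  simp only [mul_assoc, conjTranspose_mul_cancel_left_of_mem_unitaryGroup hV]

theorem conj_mul_map_star_of_mem_unitaryGroup (hV : V ∈ unitaryGroup k 𝕜) (A : Matrix k k 𝕜) :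
    V * (A * A.map star) * Vᴴ = V * A * Vᵀ * (V * A * Vᵀ).map star := by
  have hVt : Vᵀ * V.map star = 1 := by
    rw [← conjTranspose_transpose, ← transpose_mul,
      conjTranspose_mul_self_of_mem_unitaryGroup hV, transpose_one]
  rw [map_star_mul, map_star_mul, show Vᵀ.map star = Vᴴ from rfl]
  simp only [mul_assoc]
  rw [← mul_assoc Vᵀ, hVt, one_mul]

theorem transpose_relation_of_unitary_conj {A r v w : Matrix k k 𝕜} {zlam zt : 𝕜}
    (hV : V ∈ unitaryGroup k 𝕜) (hzlam : zlam ≠ 0) (hvw : v = zlam • (Vᴴ * w * V))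
    (hv : v = zt • (r⁻¹ * (A * vᵀ * Aᴴ) * r)) :
    w = zt • ((V * r * Vᴴ)⁻¹ * (V * A * Vᵀ * wᵀ * (V * A * Vᵀ)ᴴ) * (V * r * Vᴴ)) := by
  have hinv : (V * r * Vᴴ)⁻¹ = V * r⁻¹ * Vᴴ := by
    rw [Matrix.mul_inv_rev, Matrix.mul_inv_rev,
      inv_eq_left_inv (mul_conjTranspose_self_of_mem_unitaryGroup hV),
      inv_eq_left_inv (conjTranspose_mul_self_of_mem_unitaryGroup hV), mul_assoc]
  have hw : w = zlam⁻¹ • (V * v * Vᴴ) := by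
    rw [hvw, Matrix.mul_smul, Matrix.smul_mul, smul_smul, inv_mul_cancel₀ hzlam, one_smul]
    simp only [mul_assoc, mul_conjTranspose_cancel_left_of_mem_unitaryGroup hV,
      mul_conjTranspose_self_of_mem_unitaryGroup hV, mul_one]
  conv_lhs => rw [hw, hv, hvw]
  rw [hinv]
  simp only [transpose_smul, transpose_mul, conjTranspose_mul, conjTranspose_transpose,
    transpose_conjTranspose, Matrix.smul_mul, Matrix.mul_smul, smul_smul, mul_assoc,
    conjTranspose_mul_cancel_left_of_mem_unitaryGroup hV]
  rw [mul_left_comm, inv_mul_cancel₀ hzlam, mul_one]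

theorem smul_eq_smul_of_nonsing_inv_conj_eq {s X Y : Matrix k k 𝕜} {a b : 𝕜}
    (hs : IsUnit s.det) (h : a • (s⁻¹ * X * s) = b • (s⁻¹ * Y * s)) : a • X = b • Y := by
  have := congrArg (fun Z => s * Z * s⁻¹) h
  simpa only [Matrix.mul_smul, Matrix.smul_mul, ← mul_assoc, mul_nonsing_inv _ hs, one_mul,
    mul_nonsing_inv_cancel_right _ _ hs] using this

theorem transpose_mul_eq_smul_mul_of_conj_eq {B C X : Matrix k k 𝕜} {zt zu : 𝕜}
    (hB : B ∈ unitaryGroup k 𝕜) (hC : C ∈ unitaryGroup k 𝕜) (hzu : zu ≠ 0)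
    (h : zt • (C * Xᵀ * Cᴴ) = zu • (B * Xᵀ * Bᴴ)) :
    (Bᴴ * C)ᵀ * X = (zu⁻¹ * zt) • (X * (Bᴴ * C)ᵀ) := by
  have hD : zt • (Bᴴ * C * Xᵀ) = zu • (Xᵀ * (Bᴴ * C)) := by
    have := congrArg (fun Z => Bᴴ * Z * C) h
    simpa only [Matrix.mul_smul, Matrix.smul_mul, mul_assoc,
      conjTranspose_mul_cancel_left_of_mem_unitaryGroup hB,
      conjTranspose_mul_self_of_mem_unitaryGroup hC, mul_one] using this
  have hDt : zt • (X * (Bᴴ * C)ᵀ) = zu • ((Bᴴ * C)ᵀ * X) := by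
    simpa only [transpose_smul, transpose_mul, transpose_transpose] using congrArg transpose hD
  rw [← smul_smul, hDt, smul_smul, inv_mul_cancel₀ hzu, one_smul]

theorem norm_eq_one_of_scalar_mem_unitaryGroup [Nonempty k] {r : 𝕜}
    (h : scalar k r ∈ unitaryGroup k 𝕜) : ‖r‖ = 1 := by
  rw [mem_unitaryGroup_iff, star_eq_conjTranspose] at h
  have h1 : r * starRingEnd 𝕜 r = 1 := by
    simpa using congrFun₂ h (Classical.arbitrary k) (Classical.arbitrary k)
  rw [RCLike.mul_conj] at h1
  exact (pow_eq_one_iff_of_nonneg (norm_nonneg r) two_ne_zero).mp (by exact_mod_cast h1)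

end UnitaryConjugation

/-- The anti-unitaries are encoded by unitary matrices: `θ x = A x̄` and `ξ x = B x̄`, so that
`θ X* θ*` has matrix `A * Xᵀ * Aᴴ`, `ξ* V θ V*` has matrix `Bᵀ * V.map star * A.map star * Vᴴ`,
and `θ²` has matrix `A * A.map star`. -/
theorem stmt14_general {k ι : Type*} [Fintype k] [DecidableEq k] [Nonempty k]
    (v w : ι → Matrix k k ℂ)
    (hprimw : ∃ L : ℕ, ∀ l ≥ L,
      Submodule.span ℂ
        {M : Matrix k k ℂ | ∃ μ : Fin l → ι, M = (List.ofFn fun i => w (μ i)).prod}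
        = ⊤)
    (ρv ρw rv rw : Matrix k k ℂ)
    (hrv : rv.PosDef) (hrv2 : rv * rv = ρv)
    (hrw : rw.PosDef) (hrw2 : rw * rw = ρw)
    (V : Matrix k k ℂ) (hV : V ∈ Matrix.unitaryGroup k ℂ)
    (zlam : ℂ) (hzlam : ‖zlam‖ = 1)
    (hVrel : ∀ μ, v μ = zlam • (Vᴴ * w μ * V))
    (hρrel : ρw = V * ρv * Vᴴ)
    (A B : Matrix k k ℂ)
    (hA : A ∈ Matrix.unitaryGroup k ℂ) (hB : B ∈ Matrix.unitaryGroup k ℂ)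
    (zt zu : ℂ) (hzu : ‖zu‖ = 1)
    (hθrel : ∀ μ, v μ = zt • (rv⁻¹ * (A * (v μ)ᵀ * Aᴴ) * rv))
    (hξrel : ∀ μ, w μ = zu • (rw⁻¹ * (B * (w μ)ᵀ * Bᴴ) * rw)) :
    (∃ η : ℂ, ‖η‖ = 1 ∧ Bᵀ * V.map star * A.map star * Vᴴ = η • 1) ∧
      V * (A * A.map star) * Vᴴ = B * B.map star := by
  have hrw_eq : rw = V * rv * Vᴴ :=
    hrv.posSemidef.eq_conj_of_mul_self_eq hrw.posSemidef hV (by rw [hrw2, hρrel, hrv2])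
  -- `C` is the matrix of the anti-unitary `VθV*`, acting as `x ↦ C x̄`.
  set C := V * A * Vᵀ with hC_def
  have hC : C ∈ unitaryGroup k ℂ :=
    mul_mem (mul_mem hV hA) (transpose_mem_unitaryGroup_iff.mpr hV)
  have hF : (Bᴴ * C)ᵀ ∈ unitaryGroup k ℂ :=
    transpose_mem_unitaryGroup_iff.mpr (mul_mem (Unitary.star_mem hB) hC)
  have htwist : ∀ μ, (Bᴴ * C)ᵀ * w μ = (zu⁻¹ * zt) • (w μ * (Bᴴ * C)ᵀ) := fun μ =>
    transpose_mul_eq_smul_mul_of_conj_eq hB hC (norm_ne_zero_iff.mp (hzu ▸ one_ne_zero)) <|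
      smul_eq_smul_of_nonsing_inv_conj_eq (hrw_eq ▸ (isUnit_iff_isUnit_det rw).mp hrw.isUnit) <|
        (transpose_relation_of_unitary_conj hV (norm_ne_zero_iff.mp (hzlam ▸ one_ne_zero))
          (hVrel μ) (hθrel μ)).symm.trans (hrw_eq ▸ hξrel μ)
  obtain ⟨L, hL⟩ := hprimw
  have hcenter := mem_center_of_mul_eq_smul_mul (hL L le_rfl) (ne_zero_of_mem_unitary hF) htwist
  rw [center_eq_range] at hcenter
  obtain ⟨r, hr⟩ := hcenter
  have hD : Bᴴ * C = r • 1 := by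
    rw [← transpose_transpose (Bᴴ * C), ← hr, scalar_apply, diagonal_transpose,
      smul_one_eq_diagonal]
  have hCB : C = r • B := by
    rw [← mul_conjTranspose_cancel_left_of_mem_unitaryGroup hB C, hD, Matrix.mul_smul, mul_one]
  have hr1 : ‖r‖ = 1 := norm_eq_one_of_scalar_mem_unitaryGroup (hr ▸ hF)
  refine ⟨⟨star r, by rwa [norm_star], ?_⟩, ?_⟩
  · rw [← map_star_conjTranspose_mul_mul_mul_transpose, ← hC_def, hD,
      map_smul' _ _ _ star_mul', map_star_eq_one.mpr rfl]
  · rw [conj_mul_map_star_of_mem_unitaryGroup hV, ← hC_def, hCB, smul_mul_map_star_smul hr1]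

/-- Let `v, w` be two primitive normalized tuples with faithful invariant density
matrices `ρ_v, ρ_w` (with positive square roots `rv, rw`), related by
`v_μ = e^{iλ} V* w_μ V` for a unitary `V` and phase `e^{iλ}`, with
`ρ_w = V ρ_v V*`. Suppose anti-unitaries `θ, ξ` (matrices `A, B`) and phases
`zt, zu` satisfy `v_μ = zt ρ_v^{-1/2} θ v_μ* θ* ρ_v^{1/2}` and
`w_μ = zu ρ_w^{-1/2} ξ w_μ* ξ* ρ_w^{1/2}` for all `μ` (where `θ x* θ*` has matrix
`A * xᵀ * Aᴴ`). Then `ξ* V θ V*` (matrix `Bᵀ * map star V * map star A * Vᴴ`) is a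
modulus-one scalar, and consequently `V θ² V* = ξ²` (with `θ²` having matrix
`A * map star A`). -/
theorem stmt14 {k ι : Type*} [Fintype k] [DecidableEq k] [Nonempty k] [Fintype ι]
    (v w : ι → Matrix k k ℂ)
    (hprimv : ∃ L : ℕ, ∀ l ≥ L,
      Submodule.span ℂ
        {M : Matrix k k ℂ | ∃ μ : Fin l → ι, M = (List.ofFn fun i => v (μ i)).prod}
        = ⊤)
    (hprimw : ∃ L : ℕ, ∀ l ≥ L,
      Submodule.span ℂ
        {M : Matrix k k ℂ | ∃ μ : Fin l → ι, M = (List.ofFn fun i => w (μ i)).prod}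
        = ⊤)
    (hnormv : ∑ μ, v μ * (v μ)ᴴ = 1) (hnormw : ∑ μ, w μ * (w μ)ᴴ = 1)
    (ρv ρw rv rw : Matrix k k ℂ)
    (hρv : ρv.PosDef) (hρw : ρw.PosDef)
    (hinvv : ∑ μ, (v μ)ᴴ * ρv * v μ = ρv) (hinvw : ∑ μ, (w μ)ᴴ * ρw * w μ = ρw)
    (hrv : rv.PosDef) (hrv2 : rv * rv = ρv)
    (hrw : rw.PosDef) (hrw2 : rw * rw = ρw)
    (V : Matrix k k ℂ) (hV : V ∈ Matrix.unitaryGroup k ℂ)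
    (zlam : ℂ) (hzlam : ‖zlam‖ = 1)
    (hVrel : ∀ μ, v μ = zlam • (Vᴴ * w μ * V))
    (hρrel : ρw = V * ρv * Vᴴ)
    (A B : Matrix k k ℂ)
    (hA : A ∈ Matrix.unitaryGroup k ℂ) (hB : B ∈ Matrix.unitaryGroup k ℂ)
    (zt zu : ℂ) (hzt : ‖zt‖ = 1) (hzu : ‖zu‖ = 1)
    (hθrel : ∀ μ, v μ = zt • (rv⁻¹ * (A * (v μ)ᵀ * Aᴴ) * rv))
    (hξrel : ∀ μ, w μ = zu • (rw⁻¹ * (B * (w μ)ᵀ * Bᴴ) * rw)) :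
    (∃ η : ℂ, ‖η‖ = 1 ∧ Bᵀ * V.map star * A.map star * Vᴴ = η • 1) ∧
      V * (A * A.map star) * Vᴴ = B * B.map star :=
  stmt14_general v w hprimw ρv ρw rv rw hrv hrv2 hrw hrw2 V hV zlam hzlam hVrel hρrel A B hA hB zt
    zu hzu hθrel hξrel
end
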